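/- Let k be a field and let n ≥ 4 and 1 ≤ h ≤ n − 3 be integers. Let z_{1,1}, …, z_{1,n} and z_{2,1}, …, z_{2,n} be elements of k satisfying e_n^j(z_{1,1}, …, z_{1,n}) = e_n^j(z_{2,1}, …, z_{2,n}) for all 1 ≤ j ≤ n − h − 1. For i = 1, 2 let A_i be the (n−h−1) × n matrix whose (d, j)-entry (0 ≤ d ≤ n−h−2, 1 ≤ j ≤ n) is the elementary symmetric polynomial of degree d in the n − 1 elements z_{i,1}, …, z_{i,n} with z_{i,j} omitted. Then the (n−h−1) × 2n block matrix (A_1 | −A_2) has rank strictly less than n − h − 1 if and only if the set {z_{1,1}, …, z_{1,n}, z_{2,1}, …, z_{2,n}} has at most n − h − 2 distinct elements. -/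

import Mathlib

/-!
Let `a = z_{i,j}`, let `s` be `z_i` with `a` removed, and let `E_u = e_u(z_i)`, which by hypothesis
does not depend on `i` for `u < n - h - 1`. Dividing `∏ (1 + z T)` by `1 + a T` gives
`e_d(s) = ∑_{t ≤ d} E_{d-t} (-a)^t`, so `A_i = T · V(-z_i)ᵀ` with `T` the lower unitriangular
Toeplitz matrix of `E_0, …, E_{n-h-2}` and `V` the Vandermonde matrix with `n - h - 1` columns.
After cancelling `T` and the sign of the second block, the rank falls below `n - h - 1` exactly
when a nonzero polynomial of degree `< n - h - 1` vanishes at all `-z_{i,j}`, i.e. when there are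
fewer than `n - h - 1` distinct values.
-/

open Finset Polynomial Matrix
open scoped Pointwise

namespace Multiset

variable {R : Type*} [CommRing R]

@[simp]
theorem esymm_zero (s : Multiset R) : s.esymm 0 = 1 := by
  simp [esymm]

theorem esymm_cons_succ (a : R) (s : Multiset R) (d : ℕ) :
    (a ::ₘ s).esymm (d + 1) = s.esymm (d + 1) + a * s.esymm d := by
  simp [esymm, powersetCard_cons, map_map, sum_map_mul_left]

theorem esymm_eq_sum_esymm_cons (a : R) (s : Multiset R) (d : ℕ) :
    s.esymm d = ∑ t ∈ Finset.range (d + 1), (a ::ₘ s).esymm (d - t) * (-a) ^ t := by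
  induction d with
  | zero => simp
  | succ d ih =>
    rw [sum_range_succ', Nat.sub_zero, esymm_cons_succ]
    have shift :
        ∑ t ∈ Finset.range (d + 1), (a ::ₘ s).esymm (d + 1 - (t + 1)) * (-a) ^ (t + 1)
          = -a * s.esymm d := by
      simp only [Nat.add_sub_add_right, pow_succ, ih, mul_sum]
      exact sum_congr rfl fun _ _ => by ring
    rw [shift]
    ring

end Multiset

namespace Polynomial

variable {K : Type*} [Field K]

theorem exists_mem_degreeLT_ne_zero_eval_eq_zero_iff (s : Finset K) (m : ℕ) :
    (∃ p ∈ degreeLT K m, p ≠ 0 ∧ ∀ x ∈ s, p.eval x = 0) ↔ #s < m := by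
  constructor
  · rintro ⟨p, hp, hp0, hps⟩
    by_contra! hms
    exact hp0 (eq_zero_of_degree_lt_of_eval_finset_eq_zero s
      ((mem_degreeLT.mp hp).trans_le (by exact_mod_cast hms)) hps)
  · intro hsm
    refine ⟨Lagrange.nodal s id, ?_, Lagrange.nodal_ne_zero, fun x hx => ?_⟩
    · rw [mem_degreeLT, Lagrange.degree_nodal]
      exact_mod_cast hsm
    · exact Lagrange.eval_nodal_at_node (v := id) hx

end Polynomial

namespace Matrix

section CommRing

variable {R : Type*} [CommRing R]

def lowerToeplitz (m : ℕ) (E : ℕ → R) : Matrix (Fin m) (Fin m) R :=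
  of fun d t => if t ≤ d then E (d - t) else 0

theorem lowerToeplitz_isLowerTriangular (m : ℕ) (E : ℕ → R) :
    (lowerToeplitz m E).IsLowerTriangular := by
  intro d t htd
  simp [lowerToeplitz, not_le.mpr (show d < t from htd)]

@[simp]
theorem lowerToeplitz_apply_self (m : ℕ) (E : ℕ → R) (d : Fin m) :
    lowerToeplitz m E d d = E 0 := by
  simp [lowerToeplitz]

theorem of_esymm_erase_eq_lowerToeplitz_mul {ι : Type*} [Fintype ι] [DecidableEq ι]
    (x : ι → R) {m : ℕ} {E : ℕ → R} (hE : ∀ u < m, (univ.val.map x).esymm u = E u) :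
    of (fun (d : Fin m) (j : ι) => ((univ.erase j).val.map x).esymm d)
      = lowerToeplitz m E * (rectVandermonde (-x) 1 m)ᵀ := by
  ext d j
  have cons_erase : x j ::ₘ (univ.erase j).val.map x = univ.val.map x := by
    rw [← Multiset.map_cons, erase_val, Multiset.cons_erase (mem_univ_val j)]
  have range_succ : (range m).filter (· ≤ (d : ℕ)) = range (d + 1) := by
    ext t
    simp only [mem_filter, mem_range]
    omega
  rw [of_apply, Multiset.esymm_eq_sum_esymm_cons (x j), cons_erase, ← range_succ, sum_filter,
    mul_apply, ← Fin.sum_univ_eq_sum_range (fun t => if t ≤ (d : ℕ) then _ else 0)]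
  refine sum_congr rfl fun t _ => ?_
  simp only [lowerToeplitz, of_apply, transpose_apply, rectVandermonde_apply, Pi.one_apply,
    one_pow, mul_one, Pi.neg_apply, Fin.le_def]
  split_ifs with htd
  · rw [hE _ (by omega)]
  · rw [zero_mul]

theorem rank_fromCols_neg_right {l m n : Type*} [Fintype m] [Fintype n] [DecidableEq m]
    [DecidableEq n] (A : Matrix l m R) (B : Matrix l n R) :
    (fromCols A (-B)).rank = (fromCols A B).rank := by
  have sign_change :
      fromCols A (-B) = fromCols A B * (fromBlocks 1 0 0 (-1) : Matrix (m ⊕ n) (m ⊕ n) R) := by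
    simp [fromCols_mul_fromBlocks]
  rw [sign_change, rank_mul_eq_left_of_isUnit_det]
  simpa [det_fromBlocks_zero₂₁, det_neg] using isUnit_one.neg.pow _

theorem rectVandermonde_sumElim {α β : Type*} (v : α → R) (w : β → R) (m : ℕ) :
    rectVandermonde (Sum.elim v w) 1 m
      = fromRows (rectVandermonde v 1 m) (rectVandermonde w 1 m) := by
  ext (i | i) j <;> rfl

end CommRing

section Field

variable {K : Type*} [Field K]

theorem rank_lt_card_width_iff {m n : Type*} [Fintype n] (A : Matrix m n K) :
    A.rank < Fintype.card n ↔ ∃ v ≠ 0, A *ᵥ v = 0 := by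
  have rank_nullity := LinearMap.finrank_range_add_finrank_ker A.mulVecLin
  rw [Module.finrank_fintype_fun_eq_card] at rank_nullity
  have ker_ne_bot : LinearMap.ker A.mulVecLin ≠ ⊥ ↔ ∃ v ≠ 0, A *ᵥ v = 0 := by
    simp [Submodule.ne_bot_iff, and_comm]
  rw [← ker_ne_bot, Ne, ← Submodule.finrank_eq_zero, rank]
  omega

theorem rectVandermonde_one_mulVec_degreeLTEquiv {α : Type*} (x : α → K) {m : ℕ}
    (p : degreeLT K m) :
    rectVandermonde x 1 m *ᵥ degreeLTEquiv K m p = fun i => (p : K[X]).eval (x i) := by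
  ext i
  simp [mulVec, dotProduct, rectVandermonde_apply, eval_eq_sum_degreeLTEquiv p.2, mul_comm]

theorem rank_rectVandermonde_one_lt_iff {α : Type*} [Fintype α] (x : α → K) (m : ℕ) :
    (rectVandermonde x 1 m).rank < m ↔ (Set.range x).ncard < m := by
  classical
  have h := rank_lt_card_width_iff (rectVandermonde x 1 m)
  rw [Fintype.card_fin] at h
  rw [h, Set.ncard_eq_toFinset_card', Set.toFinset_range,
    ← exists_mem_degreeLT_ne_zero_eval_eq_zero_iff, (degreeLTEquiv K m).surjective.exists]
  simp [rectVandermonde_one_mulVec_degreeLTEquiv, funext_iff, and_left_comm]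

end Field

end Matrix

theorem rank_jacobian_lt_iff_general {k : Type*} [Field k] (n h : ℕ) (hn : 4 ≤ n)
    (hh2 : h ≤ n - 3) (z : Fin 2 → Fin n → k)
    (hz : ∀ j : ℕ, 1 ≤ j → j ≤ n - h - 1 →
      (Finset.univ.val.map (z 0)).esymm j = (Finset.univ.val.map (z 1)).esymm j) :
    (Matrix.fromCols
        (Matrix.of fun (d : Fin (n - h - 1)) (j : Fin n) =>
          ((Finset.univ.erase j).val.map (z 0)).esymm (d : ℕ))
        (-(Matrix.of fun (d : Fin (n - h - 1)) (j : Fin n) =>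
          ((Finset.univ.erase j).val.map (z 1)).esymm (d : ℕ)))).rank < n - h - 1 ↔
      Set.ncard (Set.range (z 0) ∪ Set.range (z 1)) ≤ n - h - 2 := by
  classical
  set E := (univ.val.map (z 0)).esymm
  have esymm_eq : ∀ i, ∀ u < n - h - 1, (univ.val.map (z i)).esymm u = E u := by
    intro i u hu
    fin_cases i
    · rfl
    · rcases u with _ | u
      · simp [E]
      · exact (hz _ (by omega) hu.le).symm
  rw [of_esymm_erase_eq_lowerToeplitz_mul _ (esymm_eq 0),
    of_esymm_erase_eq_lowerToeplitz_mul _ (esymm_eq 1), ← Matrix.mul_neg, ← mul_fromCols,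
    rank_mul_eq_right_of_isLowerTriangular _ _ (lowerToeplitz_isLowerTriangular _ _) (by simp [E]),
    rank_fromCols_neg_right, ← transpose_fromRows, rank_transpose, ← rectVandermonde_sumElim,
    rank_rectVandermonde_one_lt_iff, Set.Sum.elim_range, ← Set.neg_range', ← Set.neg_range',
    ← Set.union_neg, Set.ncard_neg]
  omega

/-- Given `z 0, z 1 : Fin n → k` with matching elementary symmetric values in
degrees `1, …, n - h - 1`, the Jacobian block matrix `(A₁ | -A₂)` has rank strictly less than
`n - h - 1` if and only if `{z 0 j, z 1 j}` has at most `n - h - 2` distinct elements, where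
`A i` is the `(n-h-1) × n` matrix whose `(d, j)` entry is the degree-`d` elementary symmetric
polynomial of `z i` with the `j`-th coordinate omitted. -/
theorem rank_jacobian_lt_iff {k : Type*} [Field k] (n h : ℕ) (hn : 4 ≤ n) (hh1 : 1 ≤ h)
    (hh2 : h ≤ n - 3) (z : Fin 2 → Fin n → k)
    (hz : ∀ j : ℕ, 1 ≤ j → j ≤ n - h - 1 →
      (Finset.univ.val.map (z 0)).esymm j = (Finset.univ.val.map (z 1)).esymm j) :
    (Matrix.fromCols
        (Matrix.of fun (d : Fin (n - h - 1)) (j : Fin n) =>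
          ((Finset.univ.erase j).val.map (z 0)).esymm (d : ℕ))
        (-(Matrix.of fun (d : Fin (n - h - 1)) (j : Fin n) =>
          ((Finset.univ.erase j).val.map (z 1)).esymm (d : ℕ)))).rank < n - h - 1 ↔
      Set.ncard (Set.range (z 0) ∪ Set.range (z 1)) ≤ n - h - 2 :=
  rank_jacobian_lt_iff_general n h hn hh2 z hz
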